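/- Let f be a parameterization, F a rectangular parameterization set, and σ a (possibly partial) policy of the MDP M. Then f satisfies the formula Φ(F, σ) := dom(F) ∧ ⋀_{s ∈ S, σ(s) ≠ ⊥} φ^act_{s,σ(s)} if and only if f ∈ F and for every state s ∈ S with σ(s) ≠ ⊥ it holds that σ(s) = σ_{𝒫(f)}(s). -/

import Mathlib

namespace Paper6

/-- A decision tree for an MDP whose states are valuations of the variables in `Var`:
leaves carry actions from `A`, inner nodes carry a state predicate `v ≤ b`
(a variable `v : Var` together with an integer bound `b`); the left subtree
corresponds to states satisfying the predicate, the right subtree to the others. -/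
inductive DT (Var A : Type) : Type
  | leaf (a : A)
  | node (v : Var) (b : ℤ) (l r : DT Var A)

variable {Var A : Type}

/-- Evaluation of a decision tree on a state (valuation): follow the predicates
from the root to a leaf and return the leaf's action. -/
def DT.eval : DT Var A → (Var → ℤ) → A
  | .leaf a, _ => a
  | .node v b l r, s => if s v ≤ b then l.eval s else r.eval s

/-- Depth of a decision tree. -/
def DT.depth : DT Var A → ℕ
  | .leaf _ => 0
  | .node _ _ l r => max l.depth r.depth + 1

/-- `t.IsLeafAt π` holds iff the path `π` (list of booleans; `true` = go left)
leads from the root of `t` to a leaf. -/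
def DT.IsLeafAt : DT Var A → List Bool → Prop
  | .leaf _, [] => True
  | .node _ _ l _, true :: p => l.IsLeafAt p
  | .node _ _ _ r, false :: p => r.IsLeafAt p
  | _, _ => False

/-- The set of states (within the state space `X`) corresponding to the node of the
tree reached by path `π`: the root corresponds to all of `X`, the left child of a node
to the states of the node satisfying its predicate, and the right child to those
not satisfying it.  Invalid paths correspond to `∅`. -/
def DT.statesAt : DT Var A → Set (Var → ℤ) → List Bool → Set (Var → ℤ)
  | _, X, [] => X
  | .node v b l _, X, true :: p => l.statesAt {s ∈ X | s v ≤ b} p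
  | .node v b _ r, X, false :: p => r.statesAt {s ∈ X | ¬ s v ≤ b} p
  | .leaf _, _, _ :: _ => ∅

open Classical in
/-- The policy induced by a decision tree: play the action of the leaf the state is
routed to if it is available (`Av s` is the set of available actions in state `s`),
and otherwise fall back to the random action `astar`. -/
noncomputable def inducedPolicy (Av : (Var → ℤ) → Set A) (astar : A)
    (t : DT Var A) (s : Var → ℤ) : A :=
  if t.eval s ∈ Av s then t.eval s else astar

/-- The skeleton (topology) of a binary tree: the underlying tree `T` of a tree
template, forgetting all labels. -/
inductive Skel : Type
  | leaf
  | node (l r : Skel)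

/-- `sk.IsInnerAt π` holds iff the path `π` (`true` = left) leads from the root
to an inner node of the skeleton. -/
def Skel.IsInnerAt : Skel → List Bool → Prop
  | .node _ _, [] => True
  | .node l _, true :: p => l.IsInnerAt p
  | .node _ r, false :: p => r.IsInnerAt p
  | _, _ => False

/-- `sk.IsLeafAt π` holds iff the path `π` leads from the root to a leaf
of the skeleton. -/
def Skel.IsLeafAt : Skel → List Bool → Prop
  | .leaf, [] => True
  | .node l _, true :: p => l.IsLeafAt p
  | .node _ r, false :: p => r.IsLeafAt p
  | _, _ => False

/-- A parameterization `f = (δ̂, β, α̂)` of a tree template: a variable-selection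
function, a bound-selection function (on inner nodes, addressed by root-to-node
paths) and an action-selection function (on leaves). -/
structure Param (Var A : Type) where
  dvar : List Bool → Var
  bound : List Bool → ℤ
  act : List Bool → A

/-- The decision tree `𝒫(f)` instantiated from the skeleton by the
parameterization `f`: the inner node at address `p` carries the predicate
`v_{δ̂(p)} ≤ β(p)`, the leaf at address `p` carries the action `α̂(p)`. -/
def Skel.build : Skel → Param Var A → List Bool → DT Var A
  | .leaf, f, p => .leaf (f.act p)
  | .node l r, f, p =>
      .node (f.dvar p) (f.bound p) (l.build f (p ++ [true])) (r.build f (p ++ [false]))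

/-- A rectangular set of parameterizations `F`: for each inner node a set of allowed
variables and a set of allowed bounds, and for each leaf a set of allowed actions. -/
structure FamSet (Var A : Type) where
  dvarS : List Bool → Set Var
  boundS : List Bool → Set ℤ
  actS : List Bool → Set A

/-- `f ∈ F`: the parameterization `f` belongs to the rectangular set `F`
(equivalently, `f` satisfies the formula `dom(F)`). -/
def memF (sk : Skel) (F : FamSet Var A) (f : Param Var A) : Prop :=
  (∀ p, sk.IsInnerAt p → f.dvar p ∈ F.dvarS p ∧ f.bound p ∈ F.boundS p) ∧
  (∀ p, sk.IsLeafAt p → f.act p ∈ F.actS p)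

/-- For a root-to-node path, the list of (proper prefix, direction taken) pairs:
the inner nodes visited along the path together with the direction in which
the path continues. -/
def pathSteps : List Bool → List (List Bool × Bool)
  | [] => []
  | d :: p => ([], d) :: (pathSteps p).map fun q => (d :: q.1, q.2)

/-- The relation `▷` used in the selection formula: `≤` when the path goes left,
`>` when it goes right. -/
def dirRel : Bool → ℤ → ℤ → Prop
  | true, x, b => x ≤ b
  | false, x, b => x > b

/-- The selection formula `φ^sel_{s,n}` (with the parameterization `f` substituted
for the variables `δ̂_n, β_n`): state `s` is routed along the path `n`, i.e. at every
inner node on the path the value of the selected variable satisfies the required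
inequality. -/
def phiSel (f : Param Var A) (s : Var → ℤ) (n : List Bool) : Prop :=
  ∀ q ∈ pathSteps n, dirRel q.2 (s (f.dvar q.1)) (f.bound q.1)

/-- The action-choice formula `φ^act_{s,a,n}` (with `f` substituted): the leaf `n`
selects action `a`; for the random action `a = α*` the leaf may also select any
action unavailable in `s`. -/
def phiActAt (Av : (Var → ℤ) → Set A) (astar : A) (f : Param Var A)
    (s : Var → ℤ) (a : A) (n : List Bool) : Prop :=
  (a = astar ∧ (f.act n = astar ∨ f.act n ∉ Av s)) ∨ (a ≠ astar ∧ f.act n = a)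

/-- The action-choice formula `φ^act_{s,a}` (with `f` substituted): every leaf to
which `s` is routed selects action `a` in the sense of `φ^act_{s,a,n}`. -/
def phiAct (sk : Skel) (Av : (Var → ℤ) → Set A) (astar : A) (f : Param Var A)
    (s : Var → ℤ) (a : A) : Prop :=
  ∀ n, sk.IsLeafAt n → phiSel f s n → phiActAt Av astar f s a n

/-!
Proof idea: the instantiated tree `𝒫(f)` routes a state `s` to exactly one leaf, and
`φ^sel_{s,n}` holds precisely for that leaf `n`.  Hence `φ^act_{s,a}` collapses to
`φ^act_{s,a,n}` at this leaf, which for an available action `a` says exactly that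
the induced policy plays `a` in `s`.  The `dom(F)` conjunct is common to both sides.
-/

/-- The path, relative to the address `p` of the subtree's root, of the leaf to which
the tree instantiated by `f` routes the state `s`. -/
def routePath (f : Param Var A) : Skel → (Var → ℤ) → List Bool → List Bool
  | .leaf, _, _ => []
  | .node l r, s, p =>
      if s (f.dvar p) ≤ f.bound p then true :: routePath f l s (p ++ [true])
      else false :: routePath f r s (p ++ [false])

lemma eval_build (f : Param Var A) (sk : Skel) (s : Var → ℤ) (p : List Bool) :
    (sk.build f p).eval s = f.act (p ++ routePath f sk s p) := by
  induction sk generalizing p with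
  | leaf => simp [Skel.build, DT.eval, routePath]
  | node l r ihl ihr =>
    simp only [Skel.build, DT.eval, routePath]
    split_ifs <;> simp [ihl, ihr]

/-- `phiSel` for the subtree rooted at address `p`; `phiSel f s n` is `phiSelFrom f s [] n`. -/
def phiSelFrom (f : Param Var A) (s : Var → ℤ) (p n : List Bool) : Prop :=
  ∀ q ∈ pathSteps n, dirRel q.2 (s (f.dvar (p ++ q.1))) (f.bound (p ++ q.1))

lemma phiSelFrom_cons (f : Param Var A) (s : Var → ℤ) (p : List Bool) (d : Bool)
    (n : List Bool) :
    phiSelFrom f s p (d :: n) ↔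
      dirRel d (s (f.dvar p)) (f.bound p) ∧ phiSelFrom f s (p ++ [d]) n := by
  simp only [phiSelFrom, pathSteps, List.forall_mem_cons, List.forall_mem_map,
    List.append_assoc, List.singleton_append, List.append_nil]

lemma phiSelFrom_iff_eq_routePath (f : Param Var A) (sk : Skel) (s : Var → ℤ)
    (p m : List Bool) (hm : sk.IsLeafAt m) :
    phiSelFrom f s p m ↔ m = routePath f sk s p := by
  induction sk generalizing p m with
  | leaf =>
    cases m with
    | nil => simp [phiSelFrom, pathSteps, routePath]
    | cons => exact hm.elim
  | node l r ihl ihr =>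
    cases m with
    | nil => exact hm.elim
    | cons d m =>
      rw [phiSelFrom_cons]
      cases d with
      | true => by_cases h : s (f.dvar p) ≤ f.bound p <;> simp [routePath, dirRel, h, ihl _ _ hm]
      | false =>
        by_cases h : s (f.dvar p) ≤ f.bound p
        · simp [routePath, dirRel, h]
        · simp [routePath, dirRel, h, lt_of_not_ge h, ihr _ _ hm]

lemma isLeafAt_routePath (f : Param Var A) (sk : Skel) (s : Var → ℤ) (p : List Bool) :
    sk.IsLeafAt (routePath f sk s p) := by
  induction sk generalizing p with
  | leaf => trivial
  | node l r ihl ihr =>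
    simp only [routePath]
    split_ifs
    exacts [ihl _, ihr _]

lemma phiAct_iff_phiActAt_routePath (sk : Skel) (Av : (Var → ℤ) → Set A) (astar : A)
    (f : Param Var A) (s : Var → ℤ) (a : A) :
    phiAct sk Av astar f s a ↔ phiActAt Av astar f s a (routePath f sk s []) := by
  have hroute := isLeafAt_routePath f sk s []
  refine ⟨fun h => h _ hroute ((phiSelFrom_iff_eq_routePath f sk s [] _ hroute).2 rfl),
    fun h m hm hsel => ?_⟩
  rwa [(phiSelFrom_iff_eq_routePath f sk s [] m hm).1 hsel]

open Classical in
lemma phiActAt_iff_ite_eq (Av : (Var → ℤ) → Set A) (astar : A) (f : Param Var A)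
    (s : Var → ℤ) (a : A) (n : List Bool) (ha : a ∈ Av s) :
    phiActAt Av astar f s a n ↔ (if f.act n ∈ Av s then f.act n else astar) = a := by
  unfold phiActAt
  split_ifs <;> grind

lemma phiAct_iff_inducedPolicy_eq (sk : Skel) (Av : (Var → ℤ) → Set A) (astar : A)
    (f : Param Var A) (s : Var → ℤ) (a : A) (ha : a ∈ Av s) :
    phiAct sk Av astar f s a ↔ inducedPolicy Av astar (sk.build f []) s = a := by
  rw [phiAct_iff_phiActAt_routePath, phiActAt_iff_ite_eq Av astar f s a _ ha, inducedPolicy,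
    eval_build, List.nil_append]

theorem sat_phi_iff_implements_general {Var A : Type}
    (S : Set (Var → ℤ)) (Av : (Var → ℤ) → Set A) (astar : A)
    (sk : Skel) (F : FamSet Var A) (f : Param Var A)
    (σ : (Var → ℤ) → Option A)
    (hσ : ∀ s ∈ S, ∀ a, σ s = some a → a ∈ Av s) :
    (memF sk F f ∧ ∀ s ∈ S, ∀ a, σ s = some a → phiAct sk Av astar f s a) ↔
      (memF sk F f ∧ ∀ s ∈ S, ∀ a, σ s = some a →
        inducedPolicy Av astar (sk.build f []) s = a) :=
  and_congr_right fun _ => forall₄_congr fun s hs a ha =>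
    phiAct_iff_inducedPolicy_eq sk Av astar f s a (hσ s hs a ha)

/-- **Theorem 1.** Let `S` be the state space of the MDP (with available
actions `Av` and random action `astar` available everywhere), `F` a rectangular
parameterization set over the skeleton `sk`, and `σ` a partial policy.  A
parameterization `f` satisfies the formula
`Φ(F, σ) = dom(F) ∧ ⋀_{s ∈ S, σ(s) ≠ ⊥} φ^act_{s,σ(s)}`
iff `f ∈ F` and the policy induced by `𝒫(f)` agrees with `σ` on every state
where `σ` is defined. -/
theorem sat_phi_iff_implements {Var A : Type}
    (S : Set (Var → ℤ)) (Av : (Var → ℤ) → Set A) (astar : A)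
    (hstar : ∀ s, astar ∈ Av s)
    (sk : Skel) (F : FamSet Var A) (f : Param Var A)
    (σ : (Var → ℤ) → Option A)
    (hσ : ∀ s ∈ S, ∀ a, σ s = some a → a ∈ Av s) :
    (memF sk F f ∧ ∀ s ∈ S, ∀ a, σ s = some a → phiAct sk Av astar f s a) ↔
      (memF sk F f ∧ ∀ s ∈ S, ∀ a, σ s = some a →
        inducedPolicy Av astar (sk.build f []) s = a) :=
  sat_phi_iff_implements_general S Av astar sk F f σ hσ

end Paper6
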